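/- arXiv:1405.6128 — 4 statements merged into one kernel-verified Lean document; each statement's English description precedes it below -/
import Mathlib

section
/- Let Δ, k, l be natural numbers with Δ < k + 1 < Δ + l, and let z ∈ ℂ with z ≠ 0. Work in the field ℂ(X)((q)) of formal Laurent series in q over the rational function field ℂ(X), and for n ∈ ℤ set gₙ = q^{n(1+k−Δ)} · Xᵏ · (qⁿX − z)^{−l}, the inverse taken in this field (note qⁿX − z ≠ 0). Then for every n ∈ ℤ the q-adic order of gₙ is at least |n|; consequently, for every d ∈ ℤ only finitely many gₙ have a nonzero coefficient of q^d, the family (gₙ)_{n∈ℤ} is summable in the q-adic topology, and the sum ∑_{n∈ℤ} gₙ involves no negative powers of q, i.e. it is a formal power series in q with coefficients in ℂ(X). Moreover, for l = 1 there are no natural numbers Δ, k satisfying Δ < k+1 < Δ+l, while k = Δ and l = 2 always satisfy it. -/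
/-!
The denominator `qⁿX − z` has `q`-adic order `min n 0`: its lowest term is `−z` for `n > 0`,
`X − z` for `n = 0` and `qⁿX` for `n < 0`. Hence `gₙ` has order `n(1 + k − Δ) − l·min n 0`,
which is at least `n` for `n ≥ 0` because `Δ ≤ k`, and at least `−n` for `n < 0` because
`1 + k − Δ − l ≤ −1`. A family of Laurent series whose orders tend to infinity is summable,
and its sum has no coefficient below a common lower bound of the orders.
-/

open scoped Classical

/-- The variable `q` of the field `ℂ(X)((q))` of formal Laurent series over `ℂ(X)`. -/
noncomputable def qvar : LaurentSeries (RatFunc ℂ) :=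
  HahnSeries.single (1 : ℤ) (1 : RatFunc ℂ)

/-- The rational-function variable `X`, viewed as a constant Laurent series in `q`. -/
noncomputable def Xvar : LaurentSeries (RatFunc ℂ) :=
  HahnSeries.C (RatFunc.X : RatFunc ℂ)

/-- A constant `z ∈ ℂ`, viewed as an element of `ℂ(X)((q))`. -/
noncomputable def zconst (z : ℂ) : LaurentSeries (RatFunc ℂ) :=
  HahnSeries.C (RatFunc.C z)

/-- The family `gₙ = q^{n(1+k−Δ)}·Xᵏ·(qⁿX − z)^{−l}` in the field `ℂ(X)((q))`. -/
noncomputable def gfam (Δ k l : ℕ) (z : ℂ) (n : ℤ) : LaurentSeries (RatFunc ℂ) :=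
  qvar ^ (n * (1 + (k : ℤ) - (Δ : ℤ))) * Xvar ^ k *
    (qvar ^ n * Xvar - zconst z) ^ (-(l : ℤ))

open Filter HahnSeries

namespace HahnSeries

section Field

variable {Γ K : Type*} [AddCommGroup Γ] [LinearOrder Γ] [IsOrderedAddMonoid Γ] [Field K]

theorem order_inv {x : K⟦Γ⟧} (hx : x ≠ 0) : x⁻¹.order = -x.order := by
  have h := order_mul hx (inv_ne_zero hx)
  rw [mul_inv_cancel₀ hx, order_one] at h
  exact (neg_eq_of_add_eq_zero_right h.symm).symm

theorem order_zpow {x : K⟦Γ⟧} (hx : x ≠ 0) (m : ℤ) : (x ^ m).order = m • x.order := by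
  obtain ⟨n, rfl | rfl⟩ := Int.eq_nat_or_neg m
  · rw [zpow_natCast, order_pow, natCast_zsmul]
  · rw [zpow_neg, zpow_natCast, order_inv (pow_ne_zero n hx), order_pow, neg_zsmul, natCast_zsmul]

end Field

section SingleSubSingle

variable {Γ R : Type*} [LinearOrder Γ] [AddGroup R] {m n : Γ} {a b : R}

theorem coeff_min_single_sub_single_ne_zero (ha : a ≠ 0) (hb : b ≠ 0) (hab : m = n → a ≠ b) :
    (single m a - single n b).coeff (min m n) ≠ 0 := by
  rcases lt_trichotomy m n with h | rfl | h
  · simp [min_eq_left h.le, h.ne, ha]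
  · simpa [sub_eq_zero] using hab rfl
  · simp [min_eq_right h.le, coeff_single_of_ne h.ne, hb]

theorem single_sub_single_ne_zero (ha : a ≠ 0) (hb : b ≠ 0) (hab : m = n → a ≠ b) :
    single m a - single n b ≠ 0 := fun h ↦
  coeff_min_single_sub_single_ne_zero ha hb hab (by rw [h, coeff_zero])

theorem order_single_sub_single [Zero Γ] (ha : a ≠ 0) (hb : b ≠ 0) (hab : m = n → a ≠ b) :
    (single m a - single n b).order = min m n := by
  refine le_antisymm (order_le_of_coeff_ne_zero (coeff_min_single_sub_single_ne_zero ha hb hab))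
    ((le_order_iff_forall (single_sub_single_ne_zero ha hb hab)).2 fun j hj ↦ ?_)
  rw [coeff_sub, coeff_single_of_ne (hj.trans_le (min_le_left m n)).ne,
    coeff_single_of_ne (hj.trans_le (min_le_right m n)).ne, sub_zero]

end SingleSubSingle

namespace SummableFamily

variable {R ι : Type*} [AddCommMonoid R] {f : ι → LaurentSeries R} {φ : ι → ℤ}

theorem finite_setOf_coeff_ne_zero (hφ : Tendsto φ cofinite atTop)
    (horder : ∀ i, φ i ≤ (f i).order) (d : ℤ) : {i | (f i).coeff d ≠ 0}.Finite :=
  (eventually_cofinite.1 (hφ.eventually_gt_atTop d)).subset fun i hi ↦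
    not_lt.2 ((horder i).trans (order_le_of_coeff_ne_zero hi))

theorem isPWO_iUnion_support_of_tendsto (hφ : Tendsto φ cofinite atTop)
    (horder : ∀ i, φ i ≤ (f i).order) : (⋃ i, (f i).support).IsPWO := by
  obtain ⟨b, hb⟩ := hφ.isBoundedUnder_ge_atTop.bddBelow_range_of_cofinite
  refine (BddBelow.isWF ⟨b, ?_⟩).isPWO
  simp only [mem_lowerBounds, Set.mem_iUnion, mem_support, forall_exists_index]
  exact fun d i hi ↦ (hb ⟨i, rfl⟩).trans ((horder i).trans (order_le_of_coeff_ne_zero hi))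

def ofTendstoOrder (f : ι → LaurentSeries R) (hφ : Tendsto φ cofinite atTop)
    (horder : ∀ i, φ i ≤ (f i).order) : SummableFamily ℤ R ι where
  toFun := f
  isPWO_iUnion_support' := isPWO_iUnion_support_of_tendsto hφ horder
  finite_co_support' := finite_setOf_coeff_ne_zero hφ horder

theorem coeff_hsum_ofTendstoOrder_eq_zero (hφ : Tendsto φ cofinite atTop)
    (horder : ∀ i, φ i ≤ (f i).order) {d : ℤ} (hd : ∀ i, d < φ i) :
    (ofTendstoOrder f hφ horder).hsum.coeff d = 0 :=
  finsum_eq_zero_of_forall_eq_zero fun i ↦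
    coeff_eq_zero_of_lt_order ((hd i).trans_le (horder i))

end SummableFamily

end HahnSeries

theorem Int.tendsto_abs_cofinite_atTop : Tendsto (fun n : ℤ ↦ |n|) cofinite atTop :=
  Int.cofinite_eq ▸ tendsto_abs_atBot_atTop.sup tendsto_abs_atTop_atTop

theorem RatFunc.X_ne_C {K : Type*} [Field K] (z : K) : (RatFunc.X : RatFunc K) ≠ RatFunc.C z := by
  rw [← RatFunc.algebraMap_X, ← RatFunc.algebraMap_C]
  exact (IsFractionRing.injective _ _).ne (Polynomial.X_ne_C z)

theorem qvar_zpow (m : ℤ) : qvar ^ m = single m 1 :=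
  (RatFunc.single_zpow m).symm

theorem qvar_zpow_mul_Xvar_sub_zconst (z : ℂ) (n : ℤ) :
    qvar ^ n * Xvar - zconst z = single n RatFunc.X - single 0 (RatFunc.C z) := by
  rw [qvar_zpow, Xvar, zconst, C_apply, C_apply, single_mul_single, add_zero, one_mul]

theorem Xvar_ne_zero : Xvar ≠ 0 :=
  single_ne_zero RatFunc.X_ne_zero

theorem order_Xvar : Xvar.order = 0 :=
  order_single RatFunc.X_ne_zero

theorem qvar_zpow_mul_Xvar_sub_zconst_ne_zero {z : ℂ} (hz : z ≠ 0) (n : ℤ) :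
    qvar ^ n * Xvar - zconst z ≠ 0 := by
  rw [qvar_zpow_mul_Xvar_sub_zconst]
  exact single_sub_single_ne_zero RatFunc.X_ne_zero ((map_ne_zero _).2 hz)
    fun _ ↦ RatFunc.X_ne_C z

theorem order_qvar_zpow_mul_Xvar_sub_zconst {z : ℂ} (hz : z ≠ 0) (n : ℤ) :
    (qvar ^ n * Xvar - zconst z).order = min n 0 := by
  rw [qvar_zpow_mul_Xvar_sub_zconst]
  exact order_single_sub_single RatFunc.X_ne_zero ((map_ne_zero _).2 hz)
    fun _ ↦ RatFunc.X_ne_C z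

theorem order_gfam (Δ k l : ℕ) {z : ℂ} (hz : z ≠ 0) (n : ℤ) :
    (gfam Δ k l z n).order = n * (1 + k - Δ) - l * min n 0 := by
  have hq : qvar ^ (n * (1 + (k : ℤ) - Δ)) ≠ 0 := by
    rw [qvar_zpow]; exact single_ne_zero one_ne_zero
  have hX : Xvar ^ k ≠ 0 := pow_ne_zero k Xvar_ne_zero
  have hden := qvar_zpow_mul_Xvar_sub_zconst_ne_zero hz n
  rw [gfam, order_mul (mul_ne_zero hq hX) (zpow_ne_zero (G₀ := LaurentSeries (RatFunc ℂ)) _ hden), order_mul hq hX, qvar_zpow,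
    order_single one_ne_zero, order_pow, order_Xvar,
    order_zpow hden, order_qvar_zpow_mul_Xvar_sub_zconst hz]
  simp only [smul_zero, add_zero, smul_eq_mul]
  ring

theorem abs_le_order_gfam {Δ k l : ℕ} (h1 : Δ < k + 1) (h2 : k + 1 < Δ + l) {z : ℂ}
    (hz : z ≠ 0) (n : ℤ) : |n| ≤ (gfam Δ k l z n).order := by
  rw [order_gfam Δ k l hz n]
  rcases le_or_gt 0 n with hn | hn
  · rw [abs_of_nonneg hn, min_eq_right hn]
    nlinarith
  · rw [abs_of_neg hn, min_eq_left hn.le]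
    nlinarith

/-- Let `Δ, k, l ∈ ℕ` with `Δ < k + 1 < Δ + l` and `z ∈ ℂ`, `z ≠ 0`. Then each `gₙ` has
`q`-adic order at least `|n|`; consequently for every `d` only finitely many `gₙ` have a
nonzero coefficient of `q^d`, the family `(gₙ)` is summable in the `q`-adic topology, and
its sum has no negative powers of `q`. Moreover for `l = 1` there are no `Δ, k` with
`Δ < k+1 < Δ+l`, while `k = Δ`, `l = 2` always satisfies it. -/
theorem cuspidal_expansion (Δ k l : ℕ) (h1 : Δ < k + 1) (h2 : k + 1 < Δ + l)
    (z : ℂ) (hz : z ≠ 0) :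
    (∀ n : ℤ, |n| ≤ (gfam Δ k l z n).order) ∧
    (∀ d : ℤ, {n : ℤ | (gfam Δ k l z n).coeff d ≠ 0}.Finite) ∧
    (∃ F : HahnSeries.SummableFamily ℤ (RatFunc ℂ) ℤ,
      (∀ n : ℤ, F n = gfam Δ k l z n) ∧ ∀ d : ℤ, d < 0 → F.hsum.coeff d = 0) ∧
    (∀ Δ' k' : ℕ, ¬(Δ' < k' + 1 ∧ k' + 1 < Δ' + 1)) ∧
    (∀ Δ' : ℕ, Δ' < Δ' + 1 ∧ Δ' + 1 < Δ' + 2) := by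
  have horder := abs_le_order_gfam h1 h2 hz
  have habs := Int.tendsto_abs_cofinite_atTop
  refine ⟨horder, SummableFamily.finite_setOf_coeff_ne_zero habs horder,
    ⟨SummableFamily.ofTendstoOrder _ habs horder, fun _ ↦ rfl, fun d hd ↦ ?_⟩, by omega, by omega⟩
  exact SummableFamily.coeff_hsum_ofTendstoOrder_eq_zero habs horder
    fun n ↦ hd.trans_le (abs_nonneg n)
end

section
/- For (τ, α) ∈ ℍ × ℂ and A = (a b; c d) ∈ SL(2,ℤ), define the map f_A^{(τ,α)} : ℂ² → ℂ² by f_A^{(τ,α)}(t, ζ) = ( t/(cτ+d), e^{−2πi·t·cα/(cτ+d)}·ζ ), and for γ = (m,n) ∈ ℤ² define g_γ : ℂ² → ℂ² by g_γ(t, ζ) = (t, e^{2πi m t}·ζ). Then for all A, A' ∈ SL(2,ℤ) and γ, γ' ∈ ℤ²: (i) f_A^{A'·(τ,α)} ∘ f_{A'}^{(τ,α)} = f_{AA'}^{(τ,α)}; (ii) g_γ ∘ g_{γ'} = g_{γ+γ'}; (iii) g_γ ∘ f_A^{(τ,α)} = f_A^{(γA)·(τ,α)} ∘ g_{γA}, where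 γA denotes the row vector (ma+nc, mb+nd). -/
/-!
All the coordinate changes are of the form `(t, ζ) ↦ (t / j, e^{k t} ζ)`, and two such maps
compose by `(j, k) ∘ (j', k') = (j j', k / j' + k')`. Each identity therefore reduces to an identity
between the parameters: for `f_A` these are the cocycle relation of `cτ + d` and polynomial
identities in the matrix entries that follow from `ad - bc = 1`.
-/

open Complex

/-- The coordinate change `f_A^{(τ,α)}(t,ζ) = (t/(cτ+d), e^{−2πi·t·cα/(cτ+d)}·ζ)`
associated to `A = (a b; c d) ∈ SL(2,ℤ)` and `(τ,α)`. -/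
noncomputable def fmap (A : Matrix.SpecialLinearGroup (Fin 2) ℤ) (τ α : ℂ)
    (p : ℂ × ℂ) : ℂ × ℂ :=
  (p.1 / (((A.1 1 0 : ℤ) : ℂ) * τ + ((A.1 1 1 : ℤ) : ℂ)),
    Complex.exp (-2 * (Real.pi : ℂ) * Complex.I * p.1 * ((A.1 1 0 : ℤ) : ℂ) * α /
        (((A.1 1 0 : ℤ) : ℂ) * τ + ((A.1 1 1 : ℤ) : ℂ))) * p.2)

/-- The coordinate change `g_γ(t,ζ) = (t, e^{2πimt}·ζ)` associated to `γ = (m,n) ∈ ℤ²`. -/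
noncomputable def gmap (m n : ℤ) (p : ℂ × ℂ) : ℂ × ℂ :=
  (p.1, Complex.exp (2 * (Real.pi : ℂ) * Complex.I * (m : ℂ) * p.1) * p.2)

open Real

noncomputable def twistedScaling (j k : ℂ) (p : ℂ × ℂ) : ℂ × ℂ :=
  (p.1 / j, exp (k * p.1) * p.2)

theorem twistedScaling_twistedScaling (j k j' k' : ℂ) (p : ℂ × ℂ) :
    twistedScaling j k (twistedScaling j' k' p) = twistedScaling (j * j') (k / j' + k') p := by
  ext
  · simp only [twistedScaling, div_div, mul_comm]
  · simp only [twistedScaling, ← mul_assoc, ← Complex.exp_add]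
    congr 2
    ring

theorem gmap_eq_twistedScaling (m n : ℤ) : gmap m n = twistedScaling 1 (2 * π * I * m) := by
  ext p <;> simp [gmap, twistedScaling]

theorem gmap_gmap (m n m' n' : ℤ) (p : ℂ × ℂ) :
    gmap m n (gmap m' n' p) = gmap (m + m') (n + n') p := by
  simp only [gmap_eq_twistedScaling, twistedScaling_twistedScaling]
  congr 1 <;> push_cast <;> ring

section SpecialLinearGroup

variable (A A' : Matrix.SpecialLinearGroup (Fin 2) ℤ) (τ : ℂ)

theorem num_coe_sl2 :
    UpperHalfPlane.num (A : GL (Fin 2) ℝ) τ = ((A.1 0 0 : ℤ) : ℂ) * τ + ((A.1 0 1 : ℤ) : ℂ) := by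
  simp [UpperHalfPlane.num]

theorem denom_coe_sl2 :
    UpperHalfPlane.denom (A : GL (Fin 2) ℝ) τ = ((A.1 1 0 : ℤ) : ℂ) * τ + ((A.1 1 1 : ℤ) : ℂ) := by
  simp [UpperHalfPlane.denom]

theorem sl2_det_complex :
    ((A.1 0 0 : ℤ) : ℂ) * ((A.1 1 1 : ℤ) : ℂ) - ((A.1 0 1 : ℤ) : ℂ) * ((A.1 1 0 : ℤ) : ℂ) = 1 := by
  have h := A.2
  rw [Matrix.det_fin_two] at h
  exact_mod_cast h

theorem fmap_eq_twistedScaling (α : ℂ) :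
    fmap A τ α = twistedScaling (UpperHalfPlane.denom (A : GL (Fin 2) ℝ) τ)
      (-2 * π * I * ((A.1 1 0 : ℤ) : ℂ) * α / UpperHalfPlane.denom (A : GL (Fin 2) ℝ) τ) := by
  ext p <;> simp only [fmap, twistedScaling, denom_coe_sl2]
  congr 2
  ring

theorem fmap_fmap (α : ℂ) (hτ : τ.im ≠ 0) (p : ℂ × ℂ) :
    fmap A (UpperHalfPlane.num (A' : GL (Fin 2) ℝ) τ / UpperHalfPlane.denom (A' : GL (Fin 2) ℝ) τ)
      (α / UpperHalfPlane.denom (A' : GL (Fin 2) ℝ) τ) (fmap A' τ α p) = fmap (A * A') τ α p := by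
  have hcocycle := UpperHalfPlane.denom_cocycle (A : GL (Fin 2) ℝ) A' hτ
  have hj' := UpperHalfPlane.denom_ne_zero_of_im (A' : GL (Fin 2) ℝ) hτ
  have hJ := left_ne_zero_of_mul (hcocycle ▸ UpperHalfPlane.denom_ne_zero_of_im _ hτ)
  rw [fmap_eq_twistedScaling, fmap_eq_twistedScaling, fmap_eq_twistedScaling,
    twistedScaling_twistedScaling, map_mul, map_mul, hcocycle]
  congr 1
  rw [Matrix.SpecialLinearGroup.coe_mul, Matrix.mul_apply, Fin.sum_univ_two]
  field_simp
  simp only [denom_coe_sl2, num_coe_sl2] at hj' ⊢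
  push_cast
  field_simp
  linear_combination (α * ((A.1 1 0 : ℤ) : ℂ)) * sl2_det_complex A'

theorem gmap_fmap (m n : ℤ) (α : ℂ) (hτ : τ.im ≠ 0) (p : ℂ × ℂ) :
    gmap m n (fmap A τ α p) =
      fmap A τ (α + ((m * A.1 0 0 + n * A.1 1 0 : ℤ) : ℂ) * τ + ((m * A.1 0 1 + n * A.1 1 1 : ℤ) : ℂ))
        (gmap (m * A.1 0 0 + n * A.1 1 0) (m * A.1 0 1 + n * A.1 1 1) p) := by
  have hj := UpperHalfPlane.denom_ne_zero_of_im (A : GL (Fin 2) ℝ) hτ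
  simp only [fmap_eq_twistedScaling, gmap_eq_twistedScaling, twistedScaling_twistedScaling,
    denom_coe_sl2] at hj ⊢
  congr 1
  · ring
  · field_simp
    push_cast
    linear_combination (-(m : ℂ)) * sl2_det_complex A

end SpecialLinearGroup

/-- Compatibility of the coordinate changes `f_A^{(τ,α)}` and `g_γ`:
(i) `f_A^{A'·(τ,α)} ∘ f_{A'}^{(τ,α)} = f_{AA'}^{(τ,α)}`;
(ii) `g_γ ∘ g_{γ'} = g_{γ+γ'}`;
(iii) `g_γ ∘ f_A^{(τ,α)} = f_A^{(γA)·(τ,α)} ∘ g_{γA}` with `γA = (ma+nc, mb+nd)`,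
where `A·(τ,α) = ((aτ+b)/(cτ+d), α/(cτ+d))` and `(m,n)·(τ,α) = (τ, α + mτ + n)`. -/
theorem coordinate_changes_compatible
    (A A' : Matrix.SpecialLinearGroup (Fin 2) ℤ) (m n m' n' : ℤ) (τ α : ℂ)
    (hτ : 0 < τ.im) :
    (∀ p : ℂ × ℂ,
      fmap A
        ((((A'.1 0 0 : ℤ) : ℂ) * τ + ((A'.1 0 1 : ℤ) : ℂ)) /
          (((A'.1 1 0 : ℤ) : ℂ) * τ + ((A'.1 1 1 : ℤ) : ℂ)))
        (α / (((A'.1 1 0 : ℤ) : ℂ) * τ + ((A'.1 1 1 : ℤ) : ℂ)))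
        (fmap A' τ α p) = fmap (A * A') τ α p) ∧
    (∀ p : ℂ × ℂ, gmap m n (gmap m' n' p) = gmap (m + m') (n + n') p) ∧
    (∀ p : ℂ × ℂ,
      gmap m n (fmap A τ α p) =
        fmap A τ
          (α + ((m * A.1 0 0 + n * A.1 1 0 : ℤ) : ℂ) * τ +
            ((m * A.1 0 1 + n * A.1 1 1 : ℤ) : ℂ))
          (gmap (m * A.1 0 0 + n * A.1 1 0) (m * A.1 0 1 + n * A.1 1 1) p)) := by
  refine ⟨fun p => ?_, gmap_gmap m n m' n', gmap_fmap A τ m n α hτ.ne'⟩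
  simpa only [num_coe_sl2, denom_coe_sl2] using fmap_fmap A A' τ α hτ.ne' p
end

section
/- Let N ∈ ℕ and let φ : ℍ × ℂ → ℂ be such that φ(τ, ·) is entire for each τ, and suppose φ satisfies the weight −N, index N/2 modular transformation law: φ((aτ+b)/(cτ+d), α/(cτ+d)) = (cτ+d)^{−N}·exp(πiN·cα²/(cτ+d))·φ(τ, α) for all (a b; c d) ∈ SL(2,ℤ), τ ∈ ℍ, α ∈ ℂ. Fix τ ∈ ℍ and suppose the j-th derivative ∂_w^j φ(τ, w)|_{w=0} vanishes for all 0 ≤ j < N. Then for every (a b; c d) ∈ SL(2,ℤ), writing τ' = (aτ+b)/(cτ+d): ∂_w^N φ(τ', w)|_{w=0} = ∂_w^N φ(τ, w)|_{w=0} and ∂_w^{N+1} φ(τ', w)|_{w=0} = (cτ+d)·∂_w^{N+1} φ(τ, w)|_{w=0}. Equivalently, in the Taylor expansion φ(τ, α) = α^N(ψ₀(τ) + ψ₁(τ)α + ⋯), the coefficient ψ₀ is modular invariant and ψ₁ transforms as a modular form of weight 1. -/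
/-!
Substituting `α = (cτ+d)β`, the transformation law reads
`φ(τ', β) = (cτ+d)^{-N} exp(πiNc(cτ+d)β²) φ(τ, (cτ+d)β)`. The Gaussian factor is `1 + O(β²)`
and `φ(τ, ·)` vanishes to order `N` at `0`, so by Leibniz's rule the Gaussian does not contribute
to the `N`-th and `(N+1)`-th derivatives at `0`, while the rescaling contributes `(cτ+d)^n` to the
`n`-th one.
-/

open Complex Finset

theorem iteratedDeriv_mul_eq_of_deriv_eq_zero {𝕜 𝔸 : Type*} [NontriviallyNormedField 𝕜]
    [NormedRing 𝔸] [NormedAlgebra 𝕜 𝔸] {f g : 𝕜 → 𝔸} {x : 𝕜} {N n : ℕ}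
    (hf : ContDiffAt 𝕜 n f x) (hg : ContDiffAt 𝕜 n g x) (hf' : deriv f x = 0)
    (hg0 : ∀ i < N, iteratedDeriv i g x = 0) (hn : n ≤ N + 1) :
    iteratedDeriv n (fun y => f y * g y) x = f x * iteratedDeriv n g x := by
  rw [iteratedDeriv_fun_mul hf hg, sum_eq_single_of_mem 0 (mem_range.mpr n.succ_pos)]
  · simp
  intro i hi hi0
  obtain rfl | hi1 := eq_or_ne i 1
  · simp [hf']
  · rw [hg0 (n - i) (by grind), mul_zero]

theorem deriv_cexp_mul_sq_zero (c : ℂ) : deriv (fun z => cexp (c * z ^ 2)) 0 = 0 := by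
  simpa using ((hasDerivAt_pow 2 (0 : ℂ)).const_mul c).cexp.deriv

theorem Matrix.SpecialLinearGroup.denom_ne_zero_of_im_ne_zero
    (A : Matrix.SpecialLinearGroup (Fin 2) ℤ) {τ : ℂ} (hτ : τ.im ≠ 0) :
    ((A 1 0 : ℤ) : ℂ) * τ + ((A 1 1 : ℤ) : ℂ) ≠ 0 := by
  have hrow : (fun i => (A 1 i : ℝ)) ≠ 0 := fun h =>
    A.row_ne_zero 1 (funext fun i => by simpa using congrFun h i)
  simpa using UpperHalfPlane.linear_ne_zero_of_im hτ hrow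

theorem iteratedDeriv_zpow_mul_cexp_mul_comp_const_mul {f : ℂ → ℂ} (hf : Differentiable ℂ f)
    {N n : ℕ} (hf0 : ∀ i < N, iteratedDeriv i f 0 = 0) (hn : n ≤ N + 1) (j c : ℂ) (k : ℤ) :
    iteratedDeriv n (fun β => j ^ k * cexp (c * β ^ 2) * f (j * β)) 0 =
      j ^ k * j ^ n * iteratedDeriv n f 0 := by
  have hscale (i : ℕ) : iteratedDeriv i (fun β => f (j * β)) 0 = j ^ i * iteratedDeriv i f 0 := by
    simpa using congrFun (iteratedDeriv_comp_const_mul (hf.contDiff (n := i)) j) 0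
  simp_rw [mul_assoc]
  rw [iteratedDeriv_const_mul_field, iteratedDeriv_mul_eq_of_deriv_eq_zero
    (by fun_prop) (g := fun β => f (j * β))
    (hf.comp (differentiable_id.const_mul j)).contDiff.contDiffAt
    (deriv_cexp_mul_sq_zero c) (fun i hi => by rw [hscale, hf0 i hi, mul_zero]) hn, hscale]
  simp

/-- Let `φ : ℍ × ℂ → ℂ` be entire in the second variable and satisfy the weight `−N`,
index `N/2` modular transformation law. If, at some `τ ∈ ℍ`, `∂_w^j φ(τ, 0) = 0` for all
`j < N`, then for every `A = (a b; c d) ∈ SL(2,ℤ)`, with `τ' = (aτ+b)/(cτ+d)`: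
`∂_w^N φ(τ', 0) = ∂_w^N φ(τ, 0)` and `∂_w^{N+1} φ(τ', 0) = (cτ+d)·∂_w^{N+1} φ(τ, 0)`;
i.e. in `φ(τ,α) = α^N(ψ₀(τ) + ψ₁(τ)α + ⋯)` the coefficient `ψ₀` is modular invariant and
`ψ₁` transforms as a modular form of weight 1. -/
theorem taylor_coefficients_modular (N : ℕ) (φ : ℂ → ℂ → ℂ)
    (hent : ∀ τ : ℂ, 0 < τ.im → Differentiable ℂ (φ τ))
    (hmod : ∀ τ : ℂ, 0 < τ.im → ∀ (A : Matrix.SpecialLinearGroup (Fin 2) ℤ) (α : ℂ),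
      φ ((((A.1 0 0 : ℤ) : ℂ) * τ + ((A.1 0 1 : ℤ) : ℂ)) /
          (((A.1 1 0 : ℤ) : ℂ) * τ + ((A.1 1 1 : ℤ) : ℂ)))
        (α / (((A.1 1 0 : ℤ) : ℂ) * τ + ((A.1 1 1 : ℤ) : ℂ))) =
        (((A.1 1 0 : ℤ) : ℂ) * τ + ((A.1 1 1 : ℤ) : ℂ)) ^ (-(N : ℤ)) *
          Complex.exp ((Real.pi : ℂ) * Complex.I * (N : ℂ) * ((A.1 1 0 : ℤ) : ℂ) *
            α ^ 2 / (((A.1 1 0 : ℤ) : ℂ) * τ + ((A.1 1 1 : ℤ) : ℂ))) * φ τ α)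
    (τ : ℂ) (hτ : 0 < τ.im)
    (hvan : ∀ j : ℕ, j < N → iteratedDeriv j (φ τ) 0 = 0) :
    ∀ A : Matrix.SpecialLinearGroup (Fin 2) ℤ,
      iteratedDeriv N
          (φ ((((A.1 0 0 : ℤ) : ℂ) * τ + ((A.1 0 1 : ℤ) : ℂ)) /
            (((A.1 1 0 : ℤ) : ℂ) * τ + ((A.1 1 1 : ℤ) : ℂ)))) 0 =
        iteratedDeriv N (φ τ) 0 ∧
      iteratedDeriv (N + 1)
          (φ ((((A.1 0 0 : ℤ) : ℂ) * τ + ((A.1 0 1 : ℤ) : ℂ)) /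
            (((A.1 1 0 : ℤ) : ℂ) * τ + ((A.1 1 1 : ℤ) : ℂ)))) 0 =
        (((A.1 1 0 : ℤ) : ℂ) * τ + ((A.1 1 1 : ℤ) : ℂ)) *
          iteratedDeriv (N + 1) (φ τ) 0 := by
  intro A
  have hj := A.denom_ne_zero_of_im_ne_zero hτ.ne'
  have hA := hmod τ hτ A
  generalize ((A.1 1 0 : ℤ) : ℂ) * τ + ((A.1 1 1 : ℤ) : ℂ) = j at hj hA ⊢
  generalize ((A.1 0 0 : ℤ) : ℂ) * τ + ((A.1 0 1 : ℤ) : ℂ) = a at hA ⊢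
  generalize ((A.1 1 0 : ℤ) : ℂ) = c at hA
  have hφ : φ (a / j) = fun β =>
      j ^ (-(N : ℤ)) * cexp ((Real.pi * I * N * c * j) * β ^ 2) * φ τ (j * β) := by
    funext β
    calc φ (a / j) β = φ (a / j) (j * β / j) := by rw [mul_div_cancel_left₀ β hj]
      _ = _ := by
        rw [hA]
        congr 2
        field_simp
  have hcoeff (n : ℕ) (hn : n ≤ N + 1) :
      iteratedDeriv n (φ (a / j)) 0 = j ^ (-(N : ℤ)) * j ^ n * iteratedDeriv n (φ τ) 0 := by
    rw [hφ]
    exact iteratedDeriv_zpow_mul_cexp_mul_comp_const_mul (hent τ hτ) hvan hn j _ _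
  refine ⟨?_, ?_⟩
  · rw [hcoeff N N.le_succ, zpow_neg, zpow_natCast, inv_mul_cancel₀ (pow_ne_zero N hj), one_mul]
  · rw [hcoeff (N + 1) le_rfl, zpow_neg, zpow_natCast, pow_succ, ← mul_assoc,
      inv_mul_cancel₀ (pow_ne_zero N hj), one_mul]
end

section
/- Let N ∈ ℕ and let φ : ℍ × ℂ → ℂ be such that φ(τ, ·) is entire for each τ, satisfying the weight −N, index N/2 modular transformation law: φ((aτ+b)/(cτ+d), α/(cτ+d)) = (cτ+d)^{−N}·exp(πiN·cα²/(cτ+d))·φ(τ, α) for all (a b; c d) ∈ SL(2,ℤ). Fix τ ∈ ℍ and suppose ∂_w^j φ(τ, w)|_{w=0} = 0 for all 0 ≤ j < N. Define Φ(t, τ, α) = t^N·φ(τ, t + α)·D(τ)/(φ(τ, t)·φ(τ, α)) where D(τ) = ∂_w^N φ(τ, w)|_{w=0}. Then for every (a b; c d) ∈ SL(2,ℤ), writing τ' = (aτ+b)/(cτ+d), and for all t, α with φ(τ, t) ≠ 0 and φ(τ, α) ≠ 0: Φ( t/(cτ+d), τ', α/(cτ+d) ) = exp( 2πiN·ctα/(cτ+d)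 )·Φ(t, τ, α). -/
open Complex

/-!
Write `j = cτ + d`. The transformation law says `φ(τ', w) = j^{-N} e(jw) φ(τ, jw)` with
`e(α) = exp(πiNcα²/j)` and `e(0) = 1`. Since `φ(τ, ·)` vanishes to order `N` at `0`, the
Leibniz rule kills every term of the `N`-th derivative except `e(0)·j^N·∂^N φ(τ, 0)`, so
`D(τ') = D(τ)`. In the ratio `Φ` all powers of `j` cancel, and the exponential factors
leave `e(t + α)/(e(t)e(α)) = exp(2πiNctα/j)`.
-/

/-- `Φ(t, τ, α)` of the statement, for the single function `f = φ(τ, ·)`. -/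
noncomputable def Phi {𝕜 : Type*} [NontriviallyNormedField 𝕜] (N : ℕ) (f : 𝕜 → 𝕜)
    (t α : 𝕜) : 𝕜 :=
  t ^ N * f (t + α) * iteratedDeriv N f 0 / (f t * f α)

section ScaledFunction

variable {𝕜 : Type*} [NontriviallyNormedField 𝕜] {N : ℕ} {f g e : 𝕜 → 𝕜} {j : 𝕜}

theorem iteratedDeriv_mul_of_iteratedDeriv_eq_zero {x : 𝕜} (hg : ContDiffAt 𝕜 N g x)
    (hf : ContDiffAt 𝕜 N f x) (hvan : ∀ k < N, iteratedDeriv k f x = 0) :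
    iteratedDeriv N (fun w => g w * f w) x = g x * iteratedDeriv N f x := by
  rw [iteratedDeriv_fun_mul hg hf, Finset.sum_eq_single 0]
  · simp
  · intro i hi hi0
    rw [Finset.mem_range] at hi
    rw [hvan (N - i) (by omega), mul_zero]
  · simp

theorem iteratedDeriv_comp_const_mul_zero {k : ℕ} (hf : ContDiff 𝕜 k f) (j : 𝕜) :
    iteratedDeriv k (fun w => f (j * w)) 0 = j ^ k * iteratedDeriv k f 0 := by
  simpa using congrFun (iteratedDeriv_comp_const_mul hf j) 0

theorem iteratedDeriv_eq_of_comp_div_eq_zpow_mul (hj : j ≠ 0)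
    (hf : ContDiff 𝕜 N f) (he : ContDiff 𝕜 N e) (he0 : e 0 = 1)
    (hvan : ∀ k < N, iteratedDeriv k f 0 = 0)
    (hg : ∀ α, g (α / j) = j ^ (-(N : ℤ)) * e α * f α) :
    iteratedDeriv N g 0 = iteratedDeriv N f 0 := by
  have hg_eq : g = fun w => j ^ (-(N : ℤ)) * (e (j * w) * f (j * w)) := by
    funext w
    rw [← mul_assoc, ← hg, mul_div_cancel_left₀ w hj]
  have hscale : ContDiff 𝕜 N (fun w : 𝕜 => j * w) := contDiff_const.mul contDiff_id
  have he_scaled : ContDiff 𝕜 N (fun w => e (j * w)) := he.comp hscale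
  have hf_scaled : ContDiff 𝕜 N (fun w => f (j * w)) := hf.comp hscale
  have hvan_scaled : ∀ k < N, iteratedDeriv k (fun w => f (j * w)) 0 = 0 := fun k hk => by
    rw [iteratedDeriv_comp_const_mul_zero (hf.of_le (by exact_mod_cast hk.le)), hvan k hk,
      mul_zero]
  rw [hg_eq, iteratedDeriv_const_mul_field,
    iteratedDeriv_mul_of_iteratedDeriv_eq_zero he_scaled.contDiffAt hf_scaled.contDiffAt
      hvan_scaled,
    iteratedDeriv_comp_const_mul_zero hf, mul_zero, he0, one_mul, zpow_neg, zpow_natCast,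
    inv_mul_cancel_left₀ (pow_ne_zero N hj)]

theorem Phi_comp_div_of_eq_zpow_mul (hj : j ≠ 0)
    (hg : ∀ α, g (α / j) = j ^ (-(N : ℤ)) * e α * f α)
    (hD : iteratedDeriv N g 0 = iteratedDeriv N f 0) (t α : 𝕜) :
    Phi N g (t / j) (α / j) = e (t + α) / (e t * e α) * Phi N f t α := by
  have hjN : j ^ (-(N : ℤ)) ≠ 0 := zpow_ne_zero _ hj
  have hpow : (t / j) ^ N = j ^ (-(N : ℤ)) * t ^ N := by
    rw [div_pow, zpow_neg, zpow_natCast, div_eq_inv_mul]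
  calc Phi N g (t / j) (α / j)
      = (j ^ (-(N : ℤ)) * j ^ (-(N : ℤ))) *
            (t ^ N * e (t + α) * f (t + α) * iteratedDeriv N f 0) /
          ((j ^ (-(N : ℤ)) * j ^ (-(N : ℤ))) * (e t * e α * (f t * f α))) := by
        rw [Phi, ← add_div, hg, hg, hg, hD, hpow]
        ring
    _ = e (t + α) / (e t * e α) * Phi N f t α := by
        rw [mul_div_mul_left _ _ (mul_ne_zero hjN hjN), Phi]
        ring

end ScaledFunction

theorem Complex.exp_mul_add_sq_div (u j t α : ℂ) :
    Complex.exp (u * (t + α) ^ 2 / j) /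
        (Complex.exp (u * t ^ 2 / j) * Complex.exp (u * α ^ 2 / j)) =
      Complex.exp (2 * u * t * α / j) := by
  rw [← Complex.exp_add, ← Complex.exp_sub]
  ring_nf

theorem int_denom_ne_zero_of_im_ne_zero (A : Matrix.SpecialLinearGroup (Fin 2) ℤ) {τ : ℂ}
    (hτ : τ.im ≠ 0) :
    ((A.1 1 0 : ℤ) : ℂ) * τ + ((A.1 1 1 : ℤ) : ℂ) ≠ 0 := by
  simpa [UpperHalfPlane.denom] using UpperHalfPlane.denom_ne_zero_of_im (A : GL (Fin 2) ℝ) hτ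

/-- Let `φ : ℍ × ℂ → ℂ` be entire in the second variable, satisfying the weight `−N`,
index `N/2` modular transformation law, and suppose `∂_w^j φ(τ, 0) = 0` for `j < N` at
some fixed `τ ∈ ℍ`. With `D(τ) = ∂_w^N φ(τ, 0)` and
`Φ(t, τ, α) = t^N·φ(τ, t+α)·D(τ)/(φ(τ,t)·φ(τ,α))`, for every `A = (a b; c d) ∈ SL(2,ℤ)`
and `τ' = (aτ+b)/(cτ+d)`:
`Φ(t/(cτ+d), τ', α/(cτ+d)) = exp(2πiN·ctα/(cτ+d))·Φ(t, τ, α)`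
whenever `φ(τ, t) ≠ 0` and `φ(τ, α) ≠ 0`. -/
theorem Phi_modular_transform (N : ℕ) (φ : ℂ → ℂ → ℂ)
    (hent : ∀ τ : ℂ, 0 < τ.im → Differentiable ℂ (φ τ))
    (hmod : ∀ τ : ℂ, 0 < τ.im → ∀ (A : Matrix.SpecialLinearGroup (Fin 2) ℤ) (α : ℂ),
      φ ((((A.1 0 0 : ℤ) : ℂ) * τ + ((A.1 0 1 : ℤ) : ℂ)) /
          (((A.1 1 0 : ℤ) : ℂ) * τ + ((A.1 1 1 : ℤ) : ℂ)))
        (α / (((A.1 1 0 : ℤ) : ℂ) * τ + ((A.1 1 1 : ℤ) : ℂ))) =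
        (((A.1 1 0 : ℤ) : ℂ) * τ + ((A.1 1 1 : ℤ) : ℂ)) ^ (-(N : ℤ)) *
          Complex.exp ((Real.pi : ℂ) * Complex.I * (N : ℂ) * ((A.1 1 0 : ℤ) : ℂ) *
            α ^ 2 / (((A.1 1 0 : ℤ) : ℂ) * τ + ((A.1 1 1 : ℤ) : ℂ))) * φ τ α)
    (τ : ℂ) (hτ : 0 < τ.im)
    (hvan : ∀ j : ℕ, j < N → iteratedDeriv j (φ τ) 0 = 0) :
    ∀ A : Matrix.SpecialLinearGroup (Fin 2) ℤ, ∀ t α : ℂ, φ τ t ≠ 0 → φ τ α ≠ 0 →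
      (t / (((A.1 1 0 : ℤ) : ℂ) * τ + ((A.1 1 1 : ℤ) : ℂ))) ^ N *
          φ ((((A.1 0 0 : ℤ) : ℂ) * τ + ((A.1 0 1 : ℤ) : ℂ)) /
              (((A.1 1 0 : ℤ) : ℂ) * τ + ((A.1 1 1 : ℤ) : ℂ)))
            (t / (((A.1 1 0 : ℤ) : ℂ) * τ + ((A.1 1 1 : ℤ) : ℂ)) +
              α / (((A.1 1 0 : ℤ) : ℂ) * τ + ((A.1 1 1 : ℤ) : ℂ))) *
          iteratedDeriv N
            (φ ((((A.1 0 0 : ℤ) : ℂ) * τ + ((A.1 0 1 : ℤ) : ℂ)) /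
              (((A.1 1 0 : ℤ) : ℂ) * τ + ((A.1 1 1 : ℤ) : ℂ)))) 0 /
          (φ ((((A.1 0 0 : ℤ) : ℂ) * τ + ((A.1 0 1 : ℤ) : ℂ)) /
                (((A.1 1 0 : ℤ) : ℂ) * τ + ((A.1 1 1 : ℤ) : ℂ)))
              (t / (((A.1 1 0 : ℤ) : ℂ) * τ + ((A.1 1 1 : ℤ) : ℂ))) *
            φ ((((A.1 0 0 : ℤ) : ℂ) * τ + ((A.1 0 1 : ℤ) : ℂ)) /
                (((A.1 1 0 : ℤ) : ℂ) * τ + ((A.1 1 1 : ℤ) : ℂ)))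
              (α / (((A.1 1 0 : ℤ) : ℂ) * τ + ((A.1 1 1 : ℤ) : ℂ)))) =
        Complex.exp (2 * (Real.pi : ℂ) * Complex.I * (N : ℂ) * ((A.1 1 0 : ℤ) : ℂ) *
            t * α / (((A.1 1 0 : ℤ) : ℂ) * τ + ((A.1 1 1 : ℤ) : ℂ))) *
          (t ^ N * φ τ (t + α) * iteratedDeriv N (φ τ) 0 / (φ τ t * φ τ α)) := by
  intro A t α _ _
  have hlaw := hmod τ hτ A
  set c : ℂ := ((A.1 1 0 : ℤ) : ℂ)
  set j : ℂ := c * τ + ((A.1 1 1 : ℤ) : ℂ)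
  have hj : j ≠ 0 := int_denom_ne_zero_of_im_ne_zero A hτ.ne'
  have hD := iteratedDeriv_eq_of_comp_div_eq_zpow_mul
    (e := fun α => Complex.exp (Real.pi * Complex.I * N * c * α ^ 2 / j)) hj
    (hent τ hτ).contDiff (by fun_prop) (by simp) hvan hlaw
  have hPhi := Phi_comp_div_of_eq_zpow_mul hj hlaw hD t α
  rw [Complex.exp_mul_add_sq_div] at hPhi
  refine hPhi.trans ?_
  congr 2
  ring
end
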